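/- arXiv:1105.1605 — 8 statements merged into one kernel-verified Lean document; each statement's English description precedes it below -/
import Mathlib

section
/- Let (X, d) be a metric space. Then the metric d is non-Archimedean (i.e., satisfies d(x, z) ≤ max{d(x, y), d(y, z)} for all x, y, z) if and only if the Hausdorff distance d_H satisfies the following condition: for any balls B₁ and B₂ in X with B₁ ∩ B₂ = ∅, one has d_H(B₁, B₂) = dist(B₁, B₂). -/
open scoped ENNReal

/-- A ball in a metric space: an open or closed ball of positive radius. -/
def IsBall {X : Type*} [MetricSpace X] (B : Set X) : Prop :=
  ∃ (a : X) (r : ℝ), 0 < r ∧ (B = Metric.ball a r ∨ B = Metric.closedBall a r)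

/-- The distance between two subsets: `inf { d(x,y) : x ∈ A, y ∈ B }`. -/
noncomputable def setEDist {X : Type*} [MetricSpace X] (A B : Set X) : ℝ≥0∞ :=
  ⨅ x ∈ A, ⨅ y ∈ B, edist x y

lemma iso_aux {X : Type*} [MetricSpace X]
    (h : ∀ x y z : X, dist x z ≤ max (dist x y) (dist y z))
    {x a b : X} (hlt : dist x a < dist a b) : dist x b = dist a b := by
  have h1 : dist x b ≤ max (dist x a) (dist a b) := h x a b
  rw [max_eq_right hlt.le] at h1
  have h2 : dist a b ≤ max (dist a x) (dist x b) := h a x b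
  rw [dist_comm a x] at h2
  rcases max_cases (dist x a) (dist x b) with ⟨he, _⟩ | ⟨he, _⟩ <;> rw [he] at h2
  · linarith
  · exact le_antisymm h1 h2

lemma center_lt {X : Type*} [MetricSpace X] {B : Set X} {a b : X} {r : ℝ}
    (hB : B = Metric.ball a r ∨ B = Metric.closedBall a r)
    (hb : b ∉ B) : ∀ x ∈ B, dist x a < dist a b := by
  intro x hx
  rcases hB with rfl | rfl
  · have h1 : dist x a < r := Metric.mem_ball.1 hx
    have h2 : r ≤ dist b a := not_lt.1 fun hc => hb (Metric.mem_ball.2 hc)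
    rw [dist_comm] at h2
    exact h1.trans_le h2
  · have h1 : dist x a ≤ r := Metric.mem_closedBall.1 hx
    have h2 : r < dist b a := not_le.1 fun hc => hb (Metric.mem_closedBall.2 hc)
    rw [dist_comm] at h2
    exact h1.trans_lt h2

theorem stmt_1 {X : Type*} [MetricSpace X] :
    (∀ x y z : X, dist x z ≤ max (dist x y) (dist y z)) ↔
    (∀ B₁ B₂ : Set X, IsBall B₁ → IsBall B₂ → B₁ ∩ B₂ = ∅ →
      EMetric.hausdorffEdist B₁ B₂ = setEDist B₁ B₂) := by
  constructor
  · intro h B₁ B₂ hB₁ hB₂ hdisj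
    obtain ⟨a, r, hr, haB⟩ := hB₁
    obtain ⟨b, s, hs, hbB⟩ := hB₂
    have haB₁ : a ∈ B₁ := by
      rcases haB with rfl | rfl
      exacts [Metric.mem_ball_self hr, Metric.mem_closedBall_self hr.le]
    have hbB₂ : b ∈ B₂ := by
      rcases hbB with rfl | rfl
      exacts [Metric.mem_ball_self hs, Metric.mem_closedBall_self hs.le]
    have hbnot : b ∉ B₁ := fun hc => by
      have : b ∈ B₁ ∩ B₂ := ⟨hc, hbB₂⟩
      rw [hdisj] at this; exact this
    have hanot : a ∉ B₂ := fun hc => by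
      have : a ∈ B₁ ∩ B₂ := ⟨haB₁, hc⟩
      rw [hdisj] at this; exact this
    have h1 : ∀ x ∈ B₁, dist x a < dist a b := center_lt haB hbnot
    have h2 : ∀ y ∈ B₂, dist y b < dist a b := by
      intro y hy
      have := center_lt hbB hanot y hy
      rwa [dist_comm b a] at this
    -- every pairwise distance equals dist a b
    have key : ∀ x ∈ B₁, ∀ y ∈ B₂, dist x y = dist a b := by
      intro x hx y hy
      have hxb : dist x b = dist a b := iso_aux h (h1 x hx)
      have hyb : dist y b < dist b x := by
        rw [dist_comm b x, hxb]; exact h2 y hy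
      have := iso_aux h hyb
      rw [dist_comm x y, this, dist_comm b x, hxb]
    have keyE : ∀ x ∈ B₁, ∀ y ∈ B₂, edist x y = edist a b := by
      intro x hx y hy
      rw [edist_dist, edist_dist, key x hx y hy]
    have hset : setEDist B₁ B₂ = edist a b := by
      apply le_antisymm
      · exact iInf₂_le_of_le a haB₁ (iInf₂_le b hbB₂)
      · exact le_iInf₂ fun x hx => le_iInf₂ fun y hy => (keyE x hx y hy).ge
    rw [hset]
    apply le_antisymm
    · apply EMetric.hausdorffEdist_le_of_mem_edist
      · exact fun x hx => ⟨b, hbB₂, (keyE x hx b hbB₂).le⟩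
      · intro y hy
        refine ⟨a, haB₁, ?_⟩
        rw [edist_comm, keyE a haB₁ y hy]
    · calc edist a b ≤ EMetric.infEdist a B₂ :=
            EMetric.le_infEdist.2 fun y hy => (keyE a haB₁ y hy).ge
        _ ≤ EMetric.hausdorffEdist B₁ B₂ :=
            EMetric.infEdist_le_hausdorffEdist_of_mem haB₁
  · intro h x y z
    by_contra hc
    push_neg at hc
    set m := max (dist x y) (dist y z) with hm
    set c := dist x z with hcdef
    have hm0 : 0 < m := by
      by_contra h'
      push_neg at h'
      have hxy : dist x y = 0 := le_antisymm ((le_max_left _ _).trans h') dist_nonneg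
      have hyz : dist y z = 0 := le_antisymm ((le_max_right _ _).trans h') dist_nonneg
      rw [dist_eq_zero] at hxy hyz
      have hc0 : c = 0 := by rw [hcdef, hxy, hyz, dist_self]
      have hm' : (0:ℝ) ≤ m := dist_nonneg.trans (le_max_left (dist x y) (dist y z))
      linarith [hc]
    have hcm : m < c := hc
    set ε := (c - m) / 2 with hε
    have hε0 : 0 < ε := by rw [hε]; linarith
    have hdisj : Metric.closedBall x m ∩ Metric.ball z ε = ∅ := by
      ext w
      simp only [Set.mem_inter_iff, Metric.mem_closedBall, Metric.mem_ball,
        Set.mem_empty_iff_false, iff_false, not_and, not_lt]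
      intro hw
      have ht : dist x z ≤ dist w x + dist w z :=
        (dist_triangle x w z).trans_eq (by rw [dist_comm w x, dist_comm w z])
      rw [hε]; linarith [ht, hw, hcdef]
    have heq := h (Metric.closedBall x m) (Metric.ball z ε)
      ⟨x, m, hm0, Or.inr rfl⟩ ⟨z, ε, hε0, Or.inl rfl⟩ hdisj
    have hyB : y ∈ Metric.closedBall x m := by
      rw [Metric.mem_closedBall, dist_comm]; exact le_max_left _ _
    have hzB : z ∈ Metric.ball z ε := Metric.mem_ball_self hε0
    have hle : setEDist (Metric.closedBall x m) (Metric.ball z ε) ≤ ENNReal.ofReal m := by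
      refine le_trans (iInf₂_le_of_le y hyB (iInf₂_le z hzB)) ?_
      rw [edist_dist]
      exact ENNReal.ofReal_le_ofReal (le_max_right _ _)
    have hge : ENNReal.ofReal (m + ε) ≤
        EMetric.hausdorffEdist (Metric.closedBall x m) (Metric.ball z ε) := by
      refine le_trans ?_ (EMetric.infEdist_le_hausdorffEdist_of_mem
        (Metric.mem_closedBall_self hm0.le))
      refine EMetric.le_infEdist.2 fun w hw => ?_
      rw [edist_dist]
      apply ENNReal.ofReal_le_ofReal
      have hw' : dist w z < ε := Metric.mem_ball.1 hw
      linarith [dist_triangle x w z, hw', hε, hcdef]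
    have hlt : ENNReal.ofReal m < ENNReal.ofReal (m + ε) :=
      ENNReal.ofReal_lt_ofReal_iff_of_nonneg hm0.le |>.2 (by linarith)
    have : ENNReal.ofReal (m + ε) ≤ ENNReal.ofReal m := by
      calc ENNReal.ofReal (m + ε) ≤ _ := hge
        _ = _ := heq
        _ ≤ _ := hle
    exact absurd (hlt.trans_le this) (lt_irrefl _)
end

section
/- Let (X, d) be a non-Archimedean metric space. Then the Hausdorff distance d_H satisfies the strong triangle inequality on non-empty subsets of X: for all non-empty A, B, C ⊆ X, d_H(A, B) ≤ max{d_H(A, C), d_H(C, B)}. Moreover, d_H(A, closure(A)) = 0 for every non-empty A ⊆ X, and if A and B are closed subsets of X with d_H(A, B) = 0, then A = B. -/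
/-!
In an ultrametric space, `infEDist x t ≤ max (edist x y) (infEDist y t)` for every `y`, because
`max` distributes over infima in `ℝ≥0∞`. Taking the infimum over `y ∈ s` gives
`infEDist x t ≤ max (infEDist x s) (hausdorffEDist s t)`, and the strong triangle inequality for
`hausdorffEDist` follows.
-/

open Metric

namespace IsUltrametricDist

variable {X : Type*} [PseudoMetricSpace X] [IsUltrametricDist X]

lemma edist_triangle_max (x y z : X) : edist x z ≤ max (edist x y) (edist y z) := by
  simp only [edist_dist, ← ENNReal.ofReal_max]
  exact ENNReal.ofReal_le_ofReal (dist_triangle_max x y z)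

lemma infEDist_le_max_edist_infEDist (x y : X) (t : Set X) :
    infEDist x t ≤ max (edist x y) (infEDist y t) := by
  unfold infEDist
  rw [sup_iInf₂_eq]
  exact le_iInf₂ fun z hz => (iInf₂_le z hz).trans (edist_triangle_max x y z)

lemma infEDist_le_max_infEDist_hausdorffEDist (x : X) (s t : Set X) :
    infEDist x t ≤ max (infEDist x s) (hausdorffEDist s t) :=
  calc infEDist x t ≤ ⨅ y ∈ s, max (edist x y) (hausdorffEDist s t) :=
        le_iInf₂ fun y hy => (infEDist_le_max_edist_infEDist x y t).trans
          (max_le_max le_rfl (infEDist_le_hausdorffEDist_of_mem hy))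
    _ = max (infEDist x s) (hausdorffEDist s t) := by
        rw [infEDist, iInf₂_sup_eq]

lemma hausdorffEDist_triangle_max (s t u : Set X) :
    hausdorffEDist s u ≤ max (hausdorffEDist s t) (hausdorffEDist t u) := by
  refine hausdorffEDist_le_of_infEDist (fun x hx => ?_) (fun z hz => ?_)
  · exact (infEDist_le_max_infEDist_hausdorffEDist x t u).trans
      (max_le_max (infEDist_le_hausdorffEDist_of_mem hx) le_rfl)
  · calc infEDist z s ≤ max (infEDist z t) (hausdorffEDist t s) :=
          infEDist_le_max_infEDist_hausdorffEDist z t s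
      _ ≤ max (hausdorffEDist u t) (hausdorffEDist t s) :=
          max_le_max (infEDist_le_hausdorffEDist_of_mem hz) le_rfl
      _ = max (hausdorffEDist s t) (hausdorffEDist t u) := by
          rw [max_comm, hausdorffEDist_comm (s := u), hausdorffEDist_comm (s := t)]

end IsUltrametricDist

theorem stmt_3 {X : Type*} [MetricSpace X]
    (hna : ∀ x y z : X, dist x z ≤ max (dist x y) (dist y z)) :
    (∀ A B C : Set X, A.Nonempty → B.Nonempty → C.Nonempty →
      EMetric.hausdorffEdist A B ≤ max (EMetric.hausdorffEdist A C) (EMetric.hausdorffEdist C B)) ∧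
    (∀ A : Set X, A.Nonempty → EMetric.hausdorffEdist A (closure A) = 0) ∧
    (∀ A B : Set X, IsClosed A → IsClosed B → EMetric.hausdorffEdist A B = 0 → A = B) := by
  have : IsUltrametricDist X := ⟨hna⟩
  exact ⟨fun A B C _ _ _ => IsUltrametricDist.hausdorffEDist_triangle_max A C B,
    fun _ _ => hausdorffEDist_self_closure,
    fun _ _ hA hB => (hA.hausdorffEDist_zero_iff hB).mp⟩
end

section
/- Let (X, d) be a non-Archimedean metric space and let {B_m}_{m=1}^∞ be a sequence of balls in X that is Cauchy with respect to the Hausdorff distance d_H. Then either diam(B_m) → 0 as m → ∞, or the sequence is eventually constant, i.e., there exists m such that B_m = B_{m+i} for all i = 1, 2, …. -/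
open scoped ENNReal

private lemma ultra_edist {X : Type*} [MetricSpace X]
    (hna : ∀ x y z : X, dist x z ≤ max (dist x y) (dist y z)) (x y z : X) :
    edist x z ≤ max (edist x y) (edist y z) := by
  have hmono : Monotone ENNReal.ofReal := fun _ _ h => ENNReal.ofReal_le_ofReal h
  rw [edist_dist, edist_dist, edist_dist, ← hmono.map_max]
  exact ENNReal.ofReal_le_ofReal (hna x y z)

/-- Diameter of a ball with radius parameter r is at most r in an ultrametric space. -/
private lemma diam_ball_le {X : Type*} [MetricSpace X]
    (hna : ∀ x y z : X, dist x z ≤ max (dist x y) (dist y z)) {B : Set X} {a : X} {r : ℝ}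
    (hB : B = Metric.ball a r ∨ B = Metric.closedBall a r) :
    EMetric.diam B ≤ ENNReal.ofReal r := by
  apply EMetric.diam_le
  intro x hx y hy
  have hxa : dist x a ≤ r := by
    rcases hB with h | h <;> rw [h] at hx
    · exact le_of_lt hx
    · exact hx
  have hay : dist y a ≤ r := by
    rcases hB with h | h <;> rw [h] at hy
    · exact le_of_lt hy
    · exact hy
  have : dist x y ≤ r := by
    have := hna x a y
    rw [dist_comm a y] at this
    exact this.trans (max_le hxa hay)
  rw [edist_dist]
  exact ENNReal.ofReal_le_ofReal this

/-- A ball absorbs any set within Hausdorff distance < r. -/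
private lemma ball_absorb {X : Type*} [MetricSpace X]
    (hna : ∀ x y z : X, dist x z ≤ max (dist x y) (dist y z)) {B : Set X} {a : X} {r : ℝ}
    (hB : B = Metric.ball a r ∨ B = Metric.closedBall a r) (C : Set X)
    (h : EMetric.hausdorffEdist C B < ENNReal.ofReal r) : C ⊆ B := by
  intro y hy
  obtain ⟨x, hx, hxy⟩ := EMetric.exists_edist_lt_of_hausdorffEdist_lt hy h
  have hyx : dist y x < r := by rwa [edist_dist, ENNReal.ofReal_lt_ofReal_iff_of_nonneg dist_nonneg] at hxy
  rcases hB with hb | hb <;> rw [hb] at hx ⊢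
  · have := hna y x a
    rw [Metric.mem_ball] at hx ⊢
    exact lt_of_le_of_lt this (max_lt hyx hx)
  · rw [Metric.mem_closedBall] at hx ⊢
    exact le_trans (hna y x a) (max_le hyx.le hx)

private lemma diam_le_max {X : Type*} [MetricSpace X]
    (hna : ∀ x y z : X, dist x z ≤ max (dist x y) (dist y z)) (A C : Set X) {e : ℝ≥0∞}
    (h : EMetric.hausdorffEdist A C < e) :
    EMetric.diam A ≤ max (EMetric.diam C) e := by
  apply EMetric.diam_le
  intro x hx y hy
  obtain ⟨x', hx', hxx'⟩ := EMetric.exists_edist_lt_of_hausdorffEdist_lt hx h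
  obtain ⟨y', hy', hyy'⟩ := EMetric.exists_edist_lt_of_hausdorffEdist_lt hy h
  calc edist x y ≤ max (edist x x') (edist x' y) := ultra_edist hna x x' y
    _ ≤ max (edist x x') (max (edist x' y') (edist y' y)) := by
        exact max_le_max le_rfl (ultra_edist hna x' y' y)
    _ ≤ max e (max (EMetric.diam C) e) := by
        apply max_le_max hxx'.le
        apply max_le_max (EMetric.edist_le_diam_of_mem hx' hy')
        rw [edist_comm]; exact hyy'.le
    _ ≤ max (EMetric.diam C) e := by
        rw [max_comm (EMetric.diam C) e, max_left_comm]
        simp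

theorem stmt_4 {X : Type*} [MetricSpace X]
    (hna : ∀ x y z : X, dist x z ≤ max (dist x y) (dist y z))
    (B : ℕ → Set X) (hB : ∀ m, IsBall (B m))
    (hC : ∀ ε : ℝ, 0 < ε → ∃ N : ℕ, ∀ m ≥ N, ∀ n ≥ N,
      EMetric.hausdorffEdist (B m) (B n) < ENNReal.ofReal ε) :
    Filter.Tendsto (fun m => EMetric.diam (B m)) Filter.atTop (nhds 0) ∨
    ∃ N : ℕ, ∀ m ≥ N, B m = B N := by
  rw [or_iff_not_imp_left]
  intro h
  rw [ENNReal.tendsto_atTop_zero] at h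
  push_neg at h
  obtain ⟨ε, hε, hfreq⟩ := h
  -- a real positive value below ε
  set δ : ℝ≥0∞ := min ε 1 with hδdef
  have hδ0 : 0 < δ := lt_min hε zero_lt_one
  have hδtop : δ ≠ ⊤ := ne_top_of_le_ne_top ENNReal.one_ne_top (min_le_right _ _)
  set e : ℝ := δ.toReal with hedef
  have he : 0 < e := ENNReal.toReal_pos hδ0.ne' hδtop
  have hofe : ENNReal.ofReal e = δ := ENNReal.ofReal_toReal hδtop
  obtain ⟨N, hN⟩ := hC (e / 2) (by linarith)
  have hhalf : ENNReal.ofReal (e / 2) < ε := by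
    calc ENNReal.ofReal (e / 2) < ENNReal.ofReal e := by
          rw [ENNReal.ofReal_lt_ofReal_iff he]; linarith
      _ = δ := hofe
      _ ≤ ε := min_le_left _ _
  -- pick m₀ ≥ N with big diameter
  obtain ⟨m₀, hm₀N, hm₀⟩ := hfreq N
  -- all diameters past N exceed ofReal (e/2)
  have hbig : ∀ n ≥ N, ENNReal.ofReal (e / 2) < EMetric.diam (B n) := by
    intro n hn
    have hd := diam_le_max hna (B m₀) (B n) (hN m₀ hm₀N n hn)
    have h1 : ENNReal.ofReal (e / 2) < EMetric.diam (B m₀) := hhalf.trans hm₀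
    rcases max_cases (EMetric.diam (B n)) (ENNReal.ofReal (e / 2)) with ⟨hm, _⟩ | ⟨hm, hle⟩
    · rw [hm] at hd; exact h1.trans_le hd
    · rw [hm] at hd; exact absurd (h1.trans_le hd) (lt_irrefl _)
  -- mutual inclusion
  have hsub : ∀ m ≥ N, ∀ n ≥ N, B m ⊆ B n := by
    intro m hm n hn
    obtain ⟨a, r, hr, hball⟩ := hB n
    have hdr : EMetric.diam (B n) ≤ ENNReal.ofReal r := diam_ball_le hna hball
    have : EMetric.hausdorffEdist (B m) (B n) < ENNReal.ofReal r :=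
      lt_of_lt_of_le (hN m hm n hn) (le_trans (hbig n hn).le hdr)
    exact ball_absorb hna hball (B m) this
  exact ⟨N, fun m hm => le_antisymm (hsub m hm N le_rfl) (hsub N le_rfl m hm)⟩
end

section
/- Let (X, d) be a non-Archimedean metric space and let {B_m}_{m=1}^∞ be a sequence of balls in X. If B_m converges to a non-empty closed subset D of X in the Hausdorff distance d_H, then D is either a ball in X or a one-point set {x} for some x ∈ X. -/
open scoped ENNReal

/-!
In an ultrametric space a ball `B` contains, together with any two of its points `u, y`, the
whole closed ball of radius `dist u y` around `u`. This property survives closed Hausdorff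
limits: points `u', y'` close enough to `u, y` span the same closed ball, because all triangles
are isosceles. A bounded set `D` with this property and a point `u ∈ D` is the open or closed
ball around `u` of radius `sup_{y ∈ D} dist u y`, according to whether the supremum is attained.
-/

open Metric Filter Topology Bornology

def IsBallConvex {X : Type*} [PseudoMetricSpace X] (D : Set X) : Prop :=
  ∀ ⦃u⦄, u ∈ D → ∀ ⦃y⦄, y ∈ D → closedBall u (dist u y) ⊆ D

section Ultrametric

variable {X : Type*} [PseudoMetricSpace X] [IsUltrametricDist X]

lemma IsUltrametricDist.dist_eq_of_dist_lt_of_dist_lt {x x' y y' : X}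
    (hx : dist x x' < dist x y) (hy : dist y y' < dist x y) : dist x' y' = dist x y := by
  have hx'y : dist x' y = dist x y := by
    rw [dist_eq_max_of_dist_ne_dist x' x y (by rw [dist_comm]; exact hx.ne),
      max_eq_right (by rw [dist_comm]; exact hx.le)]
  rw [dist_eq_max_of_dist_ne_dist x' y y' (by rw [hx'y]; exact hy.ne'), hx'y,
    max_eq_left hy.le]

lemma isBallConvex_ball (a : X) (r : ℝ) : IsBallConvex (ball a r) := by
  intro u hu y hy
  rw [IsUltrametricDist.ball_eq_of_mem hu] at hy ⊢
  exact closedBall_subset_ball (mem_ball'.1 hy)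

lemma isBallConvex_closedBall (a : X) (r : ℝ) : IsBallConvex (closedBall a r) := by
  intro u hu y hy
  rw [IsUltrametricDist.closedBall_eq_of_mem hu] at hy ⊢
  exact closedBall_subset_closedBall (mem_closedBall'.1 hy)

lemma IsBallConvex.of_tendsto_hausdorffEDist {ι : Type*} {l : Filter ι} [l.NeBot]
    {B : ι → Set X} {D : Set X} (hB : ∀ i, IsBallConvex (B i)) (hD : IsClosed D)
    (hlim : Tendsto (fun i => hausdorffEDist (B i) D) l (𝓝 0)) : IsBallConvex D := by
  intro u hu y hy z hz
  rw [← hD.closure_eq, Metric.mem_closure_iff]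
  intro ε hε
  rcases (dist_nonneg (x := u) (y := y)).eq_or_lt with huy | huy
  · exact ⟨u, hu, dist_comm z u ▸ (mem_closedBall'.1 hz).trans_lt (huy ▸ hε)⟩
  obtain ⟨i, hi⟩ :=
    (hlim.eventually (gt_mem_nhds (ENNReal.ofReal_pos.2 (lt_min hε huy)))).exists
  have hDB := hausdorffEDist_comm.trans_lt hi
  obtain ⟨u', hu'B, hu'⟩ := exists_edist_lt_of_hausdorffEDist_lt hu hDB
  obtain ⟨y', hy'B, hy'⟩ := exists_edist_lt_of_hausdorffEDist_lt hy hDB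
  rw [edist_lt_ofReal, lt_min_iff] at hu' hy'
  have hball : closedBall u (dist u y) = closedBall u' (dist u' y') := by
    rw [IsUltrametricDist.dist_eq_of_dist_lt_of_dist_lt hu'.2 hy'.2,
      IsUltrametricDist.closedBall_eq_of_mem (mem_closedBall'.2 hu'.2.le)]
  obtain ⟨w, hwD, hzw⟩ := exists_edist_lt_of_hausdorffEDist_lt
    (hB i hu'B hy'B (hball ▸ hz)) hi
  rw [edist_lt_ofReal, lt_min_iff] at hzw
  exact ⟨w, hwD, hzw.1⟩

end Ultrametric

lemma Bornology.IsBounded.bddAbove_image_dist {X : Type*} [PseudoMetricSpace X] {s : Set X}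
    (hs : IsBounded s) (u : X) : BddAbove (dist u '' s) := by
  obtain ⟨r, hr⟩ := hs.subset_closedBall u
  exact ⟨r, by rintro _ ⟨y, hy, rfl⟩; exact mem_closedBall'.1 (hr hy)⟩

lemma IsBallConvex.eq_ball_or_eq_closedBall {X : Type*} [PseudoMetricSpace X] {D : Set X}
    {u : X} (hD : IsBallConvex D) (hb : IsBounded D) (hu : u ∈ D) :
    D = ball u (sSup (dist u '' D)) ∨ D = closedBall u (sSup (dist u '' D)) := by
  have hle : ∀ y ∈ D, dist u y ≤ sSup (dist u '' D) := fun y hy =>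
    le_csSup (hb.bddAbove_image_dist u) ⟨y, hy, rfl⟩
  by_cases hattained : sSup (dist u '' D) ∈ dist u '' D
  · obtain ⟨y₀, hy₀, hR⟩ := hattained
    refine Or.inr (subset_antisymm (fun y hy => mem_closedBall'.2 (hle y hy)) ?_)
    rw [← hR]
    exact hD hu hy₀
  · refine Or.inl (subset_antisymm (fun y hy => mem_ball'.2 ((hle y hy).lt_of_ne ?_)) ?_)
    · exact fun h => hattained ⟨y, hy, h⟩
    · intro z hz
      obtain ⟨_, ⟨y, hy, rfl⟩, hzy⟩ :=
        exists_lt_of_lt_csSup ⟨_, Set.mem_image_of_mem _ hu⟩ (mem_ball'.1 hz)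
      exact hD hu hy (mem_closedBall'.2 hzy.le)

lemma Bornology.IsBounded.of_hausdorffEDist_ne_top {X : Type*} [PseudoMetricSpace X]
    {s t : Set X} (ht : IsBounded t) (h : hausdorffEDist s t ≠ ⊤) : IsBounded s := by
  refine (ht.thickening (δ := (hausdorffEDist s t).toReal + 1)).subset fun x hx => ?_
  rw [mem_thickening_iff_infEDist_lt]
  calc infEDist x t ≤ hausdorffEDist s t := infEDist_le_hausdorffEDist_of_mem hx
    _ < ENNReal.ofReal ((hausdorffEDist s t).toReal + 1) := by
      rw [ENNReal.ofReal_add ENNReal.toReal_nonneg zero_le_one, ENNReal.ofReal_toReal h,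
        ENNReal.ofReal_one]
      exact ENNReal.lt_add_right h one_ne_zero

section IsBall

variable {X : Type*} [MetricSpace X]

lemma IsBall.isBounded {B : Set X} (hB : IsBall B) : IsBounded B := by
  obtain ⟨a, r, -, rfl | rfl⟩ := hB
  exacts [isBounded_ball, isBounded_closedBall]

lemma IsBall.isBallConvex [IsUltrametricDist X] {B : Set X} (hB : IsBall B) :
    IsBallConvex B := by
  obtain ⟨a, r, -, rfl | rfl⟩ := hB
  exacts [isBallConvex_ball a r, isBallConvex_closedBall a r]

lemma IsBallConvex.isBall {D : Set X} (hD : IsBallConvex D) (hb : IsBounded D) {u v : X}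
    (hu : u ∈ D) (hv : v ∈ D) (huv : u ≠ v) : IsBall D := by
  have hR : dist u v ≤ sSup (dist u '' D) := le_csSup (hb.bddAbove_image_dist u) ⟨v, hv, rfl⟩
  exact ⟨u, _, (dist_pos.2 huv).trans_le hR, hD.eq_ball_or_eq_closedBall hb hu⟩

end IsBall

theorem stmt_5 {X : Type*} [MetricSpace X]
    (hna : ∀ x y z : X, dist x z ≤ max (dist x y) (dist y z))
    (B : ℕ → Set X) (hB : ∀ m, IsBall (B m))
    (D : Set X) (hD : D.Nonempty) (hDc : IsClosed D)
    (hconv : Filter.Tendsto (fun m => EMetric.hausdorffEdist (B m) D)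
      Filter.atTop (nhds 0)) :
    IsBall D ∨ ∃ x : X, D = {x} := by
  have : IsUltrametricDist X := ⟨hna⟩
  rcases hD.exists_eq_singleton_or_nontrivial with hsingleton | ⟨u, hu, v, hv, huv⟩
  · exact Or.inr hsingleton
  obtain ⟨m, hm⟩ := (hconv.eventually (gt_mem_nhds zero_lt_one)).exists
  have hbdd : IsBounded D := (hB m).isBounded.of_hausdorffEDist_ne_top
    (hausdorffEDist_comm.trans_lt (hm.trans ENNReal.one_lt_top)).ne
  have hconvex : IsBallConvex D :=
    .of_tendsto_hausdorffEDist (fun m => (hB m).isBallConvex) hDc hconv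
  exact Or.inl (hconvex.isBall hbdd hu hv huv)
end

section
/- Let (X, d) be a non-Archimedean metric space, let M̄♭(X) = {all balls in X} ∪ {{x} : x ∈ X} with the Hausdorff distance d_H, and let f : [0, ∞) → ℝ be a continuous function. Define ρ_f : M̄♭(X) → ℝ by ρ_f(A) = f(diam(A)). Then ρ_f is uniformly continuous on (M̄♭(X), d_H). -/
open scoped ENNReal

/-- `M̄♭(X) = M♭(X) ∪ {{x} : x ∈ X}`, inside the space of closed subsets of `X`
(with the Hausdorff distance as the (e)metric). -/
def MBallBar (X : Type*) [MetricSpace X] : Set (TopologicalSpace.Closeds X) :=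
  {C | IsBall (C : Set X) ∨ ∃ x : X, (C : Set X) = {x}}

/-!
In an ultrametric space the diameter is rigid under Hausdorff perturbation: for any sets `A`, `B`,
`diam A ≤ max (d_H(A, B)) (diam B)`, so either `diam A = diam B` or both diameters are at most
`d_H(A, B)`. Hence `f ∘ diam` changes only between sets that are both small, and there continuity
of `f` at `0` alone gives a uniform modulus.
-/

open Metric ENNReal

section Ultrametric

variable {X : Type*} [PseudoMetricSpace X] [IsUltrametricDist X]

lemma IsUltrametricDist.edist_triangle_max_s9 (x y z : X) :
    edist x z ≤ max (edist x y) (edist y z) := by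
  simpa only [edist_dist, ← ENNReal.ofReal_max] using
    ENNReal.ofReal_le_ofReal (IsUltrametricDist.dist_triangle_max x y z)

lemma ediam_le_max_hausdorffEDist_ediam (s t : Set X) :
    ediam s ≤ max (hausdorffEDist s t) (ediam t) := by
  refine ediam_le fun x hx y hy => le_of_not_gt fun hxy => ?_
  obtain ⟨hH, hdiam⟩ := max_lt_iff.1 hxy
  obtain ⟨x', hx't, hxx'⟩ := exists_edist_lt_of_hausdorffEDist_lt hx hH
  obtain ⟨y', hy't, hyy'⟩ := exists_edist_lt_of_hausdorffEDist_lt hy hH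
  have hx'y' : edist x' y' < edist x y := (edist_le_ediam_of_mem hx't hy't).trans_lt hdiam
  rw [edist_comm y] at hyy'
  have := (IsUltrametricDist.edist_triangle_max_s9 x x' y).trans
    (max_le_max le_rfl (IsUltrametricDist.edist_triangle_max_s9 x' y' y))
  exact this.not_gt (max_lt hxx' (max_lt hx'y' hyy'))

lemma ediam_eq_or_le_hausdorffEDist (s t : Set X) :
    ediam s = ediam t ∨ ediam s ≤ hausdorffEDist s t ∧ ediam t ≤ hausdorffEDist s t := by
  have hst := ediam_le_max_hausdorffEDist_ediam s t
  have hts := ediam_le_max_hausdorffEDist_ediam t s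
  rw [hausdorffEDist_comm] at hts
  rcases lt_trichotomy (ediam s) (ediam t) with hlt | heq | hgt
  · have ht := (le_max_iff.1 hts).resolve_right hlt.not_ge
    exact .inr ⟨hlt.le.trans ht, ht⟩
  · exact .inl heq
  · have hs := (le_max_iff.1 hst).resolve_right hgt.not_ge
    exact .inr ⟨hs, hgt.le.trans hs⟩

lemma diam_eq_or_ofReal_le_hausdorffEDist (s t : Set X) :
    diam s = diam t ∨
      ENNReal.ofReal (diam s) ≤ hausdorffEDist s t ∧
        ENNReal.ofReal (diam t) ≤ hausdorffEDist s t := by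
  rcases ediam_eq_or_le_hausdorffEDist s t with heq | ⟨hs, ht⟩
  · exact .inl (congrArg ENNReal.toReal heq)
  · exact .inr ⟨ofReal_toReal_le.trans hs, ofReal_toReal_le.trans ht⟩

end Ultrametric

lemma uniformContinuous_comp_of_eq_or_le_edist {α : Type*} [PseudoEMetricSpace α] {D : α → ℝ}
    (hD₀ : ∀ a, 0 ≤ D a)
    (hD : ∀ a b, D a = D b ∨
      ENNReal.ofReal (D a) ≤ edist a b ∧ ENNReal.ofReal (D b) ≤ edist a b)
    {f : ℝ → ℝ} (hf : ContinuousWithinAt f (Set.Ici 0) 0) :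
    UniformContinuous (f ∘ D) := by
  rw [EMetric.uniformContinuous_iff]
  intro ε hε
  obtain ⟨δ, hδ, hfδ⟩ := EMetric.continuousWithinAt_iff.1 hf (ε / 2) (ENNReal.half_pos hε.ne')
  refine ⟨δ, hδ, fun {a b} hab => ?_⟩
  rcases hD a b with heq | ⟨ha, hb⟩
  · simpa only [Function.comp_apply, heq, edist_self] using hε
  have hf_near (c : α) (hc : ENNReal.ofReal (D c) ≤ edist a b) :
      edist (f (D c)) (f 0) < ε / 2 := by
    refine hfδ (hD₀ c) ?_
    rw [edist_dist, Real.dist_eq, sub_zero, abs_of_nonneg (hD₀ c)]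
    exact hc.trans_lt hab
  calc edist (f (D a)) (f (D b))
      ≤ edist (f (D a)) (f 0) + edist (f (D b)) (f 0) := edist_triangle_right _ _ _
    _ < ε / 2 + ε / 2 := ENNReal.add_lt_add (hf_near a ha) (hf_near b hb)
    _ = ε := ENNReal.add_halves ε

theorem stmt_9 {X : Type*} [MetricSpace X]
    (hna : ∀ x y z : X, dist x z ≤ max (dist x y) (dist y z))
    (f : ℝ → ℝ) (hf : ContinuousOn f (Set.Ici 0)) :
    UniformContinuous fun A : MBallBar X =>
      f (Metric.diam ((A : TopologicalSpace.Closeds X) : Set X)) := by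
  have : IsUltrametricDist X := ⟨hna⟩
  refine uniformContinuous_comp_of_eq_or_le_edist
    (D := fun A : MBallBar X => diam ((A : TopologicalSpace.Closeds X) : Set X))
    (fun _ => diam_nonneg) (fun A B => ?_) (hf 0 Set.self_mem_Ici)
  rw [Subtype.edist_eq, TopologicalSpace.Closeds.edist_eq]
  exact diam_eq_or_ofReal_le_hausdorffEDist _ _
end

section
/- Let (X, d_X) and (Y, d_Y) be non-Archimedean metric spaces. For any maps f, g : X → Y, the following inequalities hold: ρ_H(f, g) ≤ ρ_s(f, g) ≤ max{θ_{f,g}(ρ_H(f, g))⁺, ρ_H(f, g)}, and θ_{f,g}(ρ_H(f, g))⁺ ≤ ρ_H(f, g) + min{dis f, dis g}. -/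
open scoped ENNReal

/-- The graph of a map `f : X → Y`, as a subset of `X × Y`. -/
def graphOf {X Y : Type*} (f : X → Y) : Set (X × Y) :=
  Set.range fun x => (x, f x)

/-- `ρ_H(f,g)`: the Hausdorff distance between the graphs of `f` and `g` in the
product `X × Y` equipped with the sup-metric (which is the product metric in Mathlib). -/
noncomputable def rhoH {X Y : Type*} [MetricSpace X] [MetricSpace Y] (f g : X → Y) : ℝ≥0∞ :=
  EMetric.hausdorffEdist (graphOf f) (graphOf g)

/-- `ρ_s(f,g) = sup_x d_Y(f x, g x)`. -/
noncomputable def rhoS {X Y : Type*} [MetricSpace X] [MetricSpace Y] (f g : X → Y) : ℝ≥0∞ :=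
  ⨆ x : X, edist (f x) (g x)

/-- `θ_f(ε) = sup { d_Y(f x₁, f x₂) : d_X(x₁, x₂) < ε }`. -/
noncomputable def theta {X Y : Type*} [MetricSpace X] [MetricSpace Y]
    (f : X → Y) (ε : ℝ≥0∞) : ℝ≥0∞ :=
  ⨆ (x₁ : X) (x₂ : X) (_ : edist x₁ x₂ < ε), edist (f x₁) (f x₂)

/-- `θ_{f,g}(a)⁺`, the right-hand limit of `ε ↦ min (θ_f ε) (θ_g ε)` at `a`; since this
function is nondecreasing, the right-hand limit equals the infimum over `ε > a`. -/
noncomputable def thetaPlus {X Y : Type*} [MetricSpace X] [MetricSpace Y]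
    (f g : X → Y) (a : ℝ≥0∞) : ℝ≥0∞ :=
  ⨅ (ε : ℝ≥0∞) (_ : a < ε), min (theta f ε) (theta g ε)

/-- The distorsion `dis f = sup_{x₁,x₂} |d_Y(f x₁, f x₂) − d_X(x₁, x₂)|`,
with the absolute difference expressed in `ℝ≥0∞` via truncated subtraction. -/
noncomputable def disF {X Y : Type*} [MetricSpace X] [MetricSpace Y] (f : X → Y) : ℝ≥0∞ :=
  ⨆ (x₁ : X) (x₂ : X),
    max (edist (f x₁) (f x₂) - edist x₁ x₂) (edist x₁ x₂ - edist (f x₁) (f x₂))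

/-!
Take `ε > ρ_H(f, g)`. Each point `(x, f x)` of `Γ_f` is `ε`-close to some `(x', g x')` of `Γ_g`,
so `d(x, x') < ε` and, by the strong triangle inequality in `Y`,
`d(f x, g x) ≤ max (d(f x, g x'), d(g x', g x)) ≤ max (ε, θ_g(ε))`; by symmetry also
`d(f x, g x) ≤ max (ε, θ_f(ε))`. Letting `ε ↓ ρ_H(f, g)` gives the middle inequality. The outer two
are direct: vertical pairs `(x, f x), (x, g x)` witness `ρ_H ≤ ρ_s`, and `θ_f(ε) ≤ ε + dis f`.
-/

lemma IsUltrametricDist.edist_triangle_max_s10 {Y : Type*} [PseudoMetricSpace Y] [IsUltrametricDist Y]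
    (a b c : Y) : edist a c ≤ max (edist a b) (edist b c) := by
  simp only [edist_dist, ← ENNReal.ofReal_max]
  exact ENNReal.ofReal_le_ofReal (dist_triangle_max a b c)

lemma le_max_iInf_gt_of_forall_gt {α : Type*} [CompleteLinearOrder α] [DenselyOrdered α]
    {m : α → α} (hm : Monotone m) {a b : α} (h : ∀ ε, a < ε → b ≤ max (m ε) ε) :
    b ≤ max (⨅ (ε) (_ : a < ε), m ε) a := by
  refine le_of_forall_gt_imp_ge_of_dense fun c hc => ?_
  obtain ⟨hmc, hac⟩ := max_lt_iff.1 hc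
  obtain ⟨ε, hε, hεc⟩ : ∃ ε, a < ε ∧ m ε < c := by simpa only [iInf_lt_iff, exists_prop] using hmc
  calc b ≤ max (m (min ε c)) (min ε c) := h _ (lt_min hε hac)
    _ ≤ c := max_le ((hm (min_le_left ε c)).trans hεc.le) (min_le_right ε c)

section Graphs

variable {X Y : Type*} [MetricSpace X] [MetricSpace Y]

lemma rhoH_comm (f g : X → Y) : rhoH f g = rhoH g f :=
  Metric.hausdorffEDist_comm

lemma rhoS_comm (f g : X → Y) : rhoS f g = rhoS g f := by
  simp only [rhoS, edist_comm]

lemma thetaPlus_comm (f g : X → Y) (a : ℝ≥0∞) : thetaPlus f g a = thetaPlus g f a := by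
  simp only [thetaPlus, min_comm]

lemma theta_mono (f : X → Y) : Monotone (theta f) := fun _ _ h =>
  iSup₂_mono fun _ _ => iSup_mono' fun hlt => ⟨hlt.trans_le h, le_rfl⟩

lemma edist_le_theta (f : X → Y) {ε : ℝ≥0∞} {x₁ x₂ : X} (h : edist x₁ x₂ < ε) :
    edist (f x₁) (f x₂) ≤ theta f ε :=
  le_iSup₂_of_le x₁ x₂ (le_iSup_of_le h le_rfl)

lemma theta_le_add_disF (f : X → Y) (ε : ℝ≥0∞) : theta f ε ≤ ε + disF f := by
  refine iSup₂_le fun x₁ x₂ => iSup_le fun hlt => ?_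
  calc edist (f x₁) (f x₂) ≤ edist x₁ x₂ + (edist (f x₁) (f x₂) - edist x₁ x₂) := le_add_tsub
    _ ≤ ε + disF f := add_le_add hlt.le (le_iSup₂_of_le x₁ x₂ (le_max_left _ _))

lemma thetaPlus_le {f g : X → Y} {a ε : ℝ≥0∞} (h : a < ε) :
    thetaPlus f g a ≤ min (theta f ε) (theta g ε) :=
  iInf₂_le ε h

lemma thetaPlus_le_add_disF (f g : X → Y) (a : ℝ≥0∞) : thetaPlus f g a ≤ a + disF f :=
  calc thetaPlus f g a ≤ ⨅ (ε : ℝ≥0∞) (_ : a < ε), ε + disF f :=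
        le_iInf₂ fun _ h => (thetaPlus_le h).trans ((min_le_left _ _).trans (theta_le_add_disF f _))
    _ = a + disF f := by rw [← ENNReal.iInf₂_add, ENNReal.iInf_gt_eq_self]

lemma edist_graphOf_le_rhoS (f g : X → Y) (x : X) : edist (x, f x) (x, g x) ≤ rhoS f g := by
  rw [Prod.edist_eq, edist_self]
  exact max_le zero_le (le_iSup (fun x => edist (f x) (g x)) x)

lemma rhoH_le_rhoS (f g : X → Y) : rhoH f g ≤ rhoS f g := by
  refine Metric.hausdorffEDist_le_of_mem_edist ?_ ?_ <;> rintro _ ⟨x, rfl⟩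
  · exact ⟨_, ⟨x, rfl⟩, edist_graphOf_le_rhoS f g x⟩
  · exact ⟨_, ⟨x, rfl⟩, rhoS_comm f g ▸ edist_graphOf_le_rhoS g f x⟩

lemma edist_le_max_theta_of_rhoH_lt [IsUltrametricDist Y] {f g : X → Y} {ε : ℝ≥0∞}
    (hε : rhoH f g < ε) (x : X) : edist (f x) (g x) ≤ max (theta g ε) ε := by
  have hx : Metric.infEDist (x, f x) (graphOf g) < ε :=
    (Metric.infEDist_le_hausdorffEDist_of_mem (Set.mem_range_self x)).trans_lt hε
  obtain ⟨_, ⟨x', rfl⟩, hlt⟩ := Metric.infEDist_lt_iff.1 hx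
  rw [Prod.edist_eq, max_lt_iff] at hlt
  calc edist (f x) (g x) ≤ max (edist (f x) (g x')) (edist (g x') (g x)) :=
        IsUltrametricDist.edist_triangle_max_s10 _ _ _
    _ ≤ max (theta g ε) ε :=
        max_le (le_max_of_le_right hlt.2.le)
          (le_max_of_le_left (edist_le_theta g (edist_comm x x' ▸ hlt.1)))

lemma rhoS_le_max_min_theta [IsUltrametricDist Y] {f g : X → Y} {ε : ℝ≥0∞}
    (hε : rhoH f g < ε) : rhoS f g ≤ max (min (theta f ε) (theta g ε)) ε := by
  refine iSup_le fun x => ?_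
  have hf : edist (f x) (g x) ≤ max (theta f ε) ε :=
    edist_comm (g x) (f x) ▸ edist_le_max_theta_of_rhoH_lt (rhoH_comm f g ▸ hε) x
  rw [max_min_distrib_right]
  exact le_min hf (edist_le_max_theta_of_rhoH_lt hε x)

end Graphs

theorem stmt_10_general {X Y : Type*} [MetricSpace X] [MetricSpace Y]
    (hnaY : ∀ x y z : Y, dist x z ≤ max (dist x y) (dist y z))
    (f g : X → Y) :
    rhoH f g ≤ rhoS f g ∧
    rhoS f g ≤ max (thetaPlus f g (rhoH f g)) (rhoH f g) ∧
    thetaPlus f g (rhoH f g) ≤ rhoH f g + min (disF f) (disF g) := by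
  have : IsUltrametricDist Y := ⟨hnaY⟩
  refine ⟨rhoH_le_rhoS f g, ?_, ?_⟩
  · exact le_max_iInf_gt_of_forall_gt (fun _ _ h => min_le_min (theta_mono f h) (theta_mono g h))
      fun _ => rhoS_le_max_min_theta
  · rw [add_min]
    exact le_min (thetaPlus_le_add_disF f g _) (thetaPlus_comm f g _ ▸ thetaPlus_le_add_disF g f _)

theorem stmt_10 {X Y : Type*} [MetricSpace X] [MetricSpace Y]
    (hnaX : ∀ x y z : X, dist x z ≤ max (dist x y) (dist y z))
    (hnaY : ∀ x y z : Y, dist x z ≤ max (dist x y) (dist y z))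
    (f g : X → Y) :
    rhoH f g ≤ rhoS f g ∧
    rhoS f g ≤ max (thetaPlus f g (rhoH f g)) (rhoH f g) ∧
    thetaPlus f g (rhoH f g) ≤ rhoH f g + min (disF f) (disF g) :=
  stmt_10_general hnaY f g
end

section
/- Let (X, d_X) and (Y, d_Y) be non-Archimedean metric spaces, let f_n : X → Y (n = 1, 2, …) be maps, and let g : X → Y be uniformly continuous. Then the sequence {f_n} converges uniformly to g if and only if lim_{n → ∞} ρ_H(f_n, g) = 0. -/
open scoped ENNReal

theorem stmt_11 {X Y : Type*} [MetricSpace X] [MetricSpace Y]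
    (hnaX : ∀ x y z : X, dist x z ≤ max (dist x y) (dist y z))
    (hnaY : ∀ x y z : Y, dist x z ≤ max (dist x y) (dist y z))
    (f : ℕ → X → Y) (g : X → Y) (hg : UniformContinuous g) :
    Filter.Tendsto (fun n => ⨆ x : X, edist (f n x) (g x)) Filter.atTop (nhds 0) ↔
    Filter.Tendsto (fun n => rhoH (f n) g) Filter.atTop (nhds 0) := by
  rw [ENNReal.tendsto_nhds_zero, ENNReal.tendsto_nhds_zero]
  constructor
  · intro h ε hε
    filter_upwards [h ε hε] with n hn
    refine le_trans (EMetric.hausdorffEdist_le_of_mem_edist ?_ ?_) hn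
    · rintro _ ⟨x, rfl⟩
      exact ⟨(x, g x), ⟨x, rfl⟩, by
        simp [Prod.edist_eq]
        exact le_iSup (fun x => edist (f n x) (g x)) x⟩
    · rintro _ ⟨x, rfl⟩
      refine ⟨(x, f n x), ⟨x, rfl⟩, ?_⟩
      simp [Prod.edist_eq, edist_comm]
      exact le_iSup (fun x => edist (f n x) (g x)) x
  · intro h ε hε
    rcases eq_or_ne ε ⊤ with rfl | hεtop
    · exact Filter.Eventually.of_forall fun n => le_top
    have hε2 : (0 : ℝ≥0∞) < ε / 2 := ENNReal.half_pos hε.ne'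
    obtain ⟨δ, hδ, hgδ⟩ := EMetric.uniformContinuous_iff.mp hg (ε / 2) hε2
    have hδ' : (0 : ℝ≥0∞) < min δ (ε / 2) := lt_min hδ hε2
    filter_upwards [(h (min δ (ε / 2) / 2) (ENNReal.half_pos hδ'.ne')).and
      (Filter.Eventually.of_forall fun _ => True.intro)] with n hn
    refine iSup_le fun x => le_of_lt ?_
    have hmem : (x, f n x) ∈ graphOf (f n) := ⟨x, rfl⟩
    have h1 : EMetric.infEdist (x, f n x) (graphOf g) < min δ (ε / 2) := by
      calc EMetric.infEdist (x, f n x) (graphOf g)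
          ≤ rhoH (f n) g := EMetric.infEdist_le_hausdorffEdist_of_mem hmem
        _ ≤ min δ (ε / 2) / 2 := hn.1
        _ < min δ (ε / 2) := ENNReal.half_lt_self hδ'.ne'
          (ne_of_lt (lt_of_le_of_lt (min_le_right _ _)
            (lt_of_le_of_lt ENNReal.half_le_self (lt_top_iff_ne_top.mpr hεtop))))
    obtain ⟨p, hp, hpd⟩ := EMetric.infEdist_lt_iff.mp h1
    obtain ⟨x', rfl⟩ := hp
    rw [Prod.edist_eq, max_lt_iff] at hpd
    have hx : edist (g x) (g x') < ε / 2 :=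
      hgδ (lt_of_lt_of_le hpd.1 (min_le_left _ _))
    have hy : edist (f n x) (g x') < ε / 2 :=
      lt_of_lt_of_le hpd.2 (min_le_right _ _)
    calc edist (f n x) (g x) ≤ edist (f n x) (g x') + edist (g x') (g x) :=
          edist_triangle _ _ _
      _ < ε / 2 + ε / 2 := ENNReal.add_lt_add hy (by rwa [edist_comm])
      _ = ε := ENNReal.add_halves ε
end

section
/- Let (X, d_X) and (Y, d_Y) be non-Archimedean metric spaces such that every ball in X contains at least two distinct points, and let P₁, P₂ ∈ D♭(X, Y) with P₁ ≠ P₂. Then β^{*0}_{X,Y}(P₁, P₂) = ρ_s(P₁, P₂), where β^{*0}_{X,Y}(P₁, P₂) = sup_{λ > 0} β^{*λ}_{X,Y}(P₁, P₂). -/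
open scoped ENNReal

/-- The type `M♭(X)` of all balls of `X`. -/
abbrev BallSet (X : Type*) [MetricSpace X] := {B : Set X // IsBall B}

-- `β^λ_{X,Y}(P₁,P₂)`: zero if `P₁ = P₂`; otherwise the infimum of those `ε > 0` such that
-- `d_Y(P₁(B), P₂(B^{λε})) ≤ ε` and `d_Y(P₂(B), P₁(B^{λε})) ≤ ε` for every ball `B`, where
-- `B^{δ}` denotes the `δ`-neighborhood (thickening) of `B`, which is again a ball.
open Classical in
noncomputable def betaL {X Y : Type*} [MetricSpace X] [MetricSpace Y]
    (lam : ℝ) (P₁ P₂ : BallSet X → Y) : ℝ≥0∞ :=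
  if P₁ = P₂ then 0 else
    sInf {e : ℝ≥0∞ | ∃ ε : ℝ, 0 < ε ∧ e = ENNReal.ofReal ε ∧
      ∀ B : BallSet X, ∃ B' : BallSet X,
        (B' : Set X) = Metric.thickening (lam * ε) (B : Set X) ∧
        edist (P₁ B) (P₂ B') ≤ ENNReal.ofReal ε ∧
        edist (P₂ B) (P₁ B') ≤ ENNReal.ofReal ε}

/-- `β^{*λ}_{X,Y}(P₁,P₂)`: the infimum of those `ε > 0` such that for every ball `B` there
exist positive `ε_B, ε'_B ≤ ε` with `d_Y(P₁(B), P₂(B^{λε_B})) ≤ ε` and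
`d_Y(P₂(B), P₁(B^{λε'_B})) ≤ ε`. -/
noncomputable def betaStarL {X Y : Type*} [MetricSpace X] [MetricSpace Y]
    (lam : ℝ) (P₁ P₂ : BallSet X → Y) : ℝ≥0∞ :=
  sInf {e : ℝ≥0∞ | ∃ ε : ℝ, 0 < ε ∧ e = ENNReal.ofReal ε ∧
    ∀ B : BallSet X, ∃ εB εB' : ℝ, 0 < εB ∧ εB ≤ ε ∧ 0 < εB' ∧ εB' ≤ ε ∧
      ∃ B' B'' : BallSet X,
        (B' : Set X) = Metric.thickening (lam * εB) (B : Set X) ∧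
        (B'' : Set X) = Metric.thickening (lam * εB') (B : Set X) ∧
        edist (P₁ B) (P₂ B') ≤ ENNReal.ofReal ε ∧
        edist (P₂ B) (P₁ B'') ≤ ENNReal.ofReal ε}

/-- `ρ_s(P₁,P₂) = sup_{B ∈ M♭(X)} d_Y(P₁(B), P₂(B))`. -/
noncomputable def rhoSB {X Y : Type*} [MetricSpace X] [MetricSpace Y]
    (P₁ P₂ : BallSet X → Y) : ℝ≥0∞ :=
  ⨆ B : BallSet X, edist (P₁ B) (P₂ B)

/-- `ρ_H(P₁,P₂)`: the Hausdorff distance between the graphs of `P₁` and `P₂` inside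
`W = M♭(X) × Y` with the sup-metric `max (d_{X,H}, d_Y)`, written out via the
`sup-inf` formula for the Hausdorff distance. -/
noncomputable def rhoHB {X Y : Type*} [MetricSpace X] [MetricSpace Y]
    (P₁ P₂ : BallSet X → Y) : ℝ≥0∞ :=
  max
    (⨆ B : BallSet X, ⨅ B' : BallSet X,
      max (EMetric.hausdorffEdist (B : Set X) (B' : Set X)) (edist (P₁ B) (P₂ B')))
    (⨆ B : BallSet X, ⨅ B' : BallSet X,
      max (EMetric.hausdorffEdist (B : Set X) (B' : Set X)) (edist (P₂ B) (P₁ B')))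

/-- Membership in `D♭^{(1)}(X,Y)`: `d_Y(P(B), P(B^ε)) ≤ ε` for all `ε > 0` and all balls `B`. -/
def memDflatOne {X Y : Type*} [MetricSpace X] [MetricSpace Y] (P : BallSet X → Y) : Prop :=
  ∀ ε : ℝ, 0 < ε → ∀ B B' : BallSet X,
    (B' : Set X) = Metric.thickening ε (B : Set X) → edist (P B) (P B') ≤ ENNReal.ofReal ε


open scoped ENNReal NNReal
open Metric

/-! Ultrametric balls are stable under small thickenings: `B^δ = B` as soon as `δ` is at most
the radius of `B`. Hence every ball can be matched with itself in `β^{*λ}`, which gives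
`β^{*λ} ≤ ρ_s`. Conversely, once `λ ε` is at most the radius of `B`, the only admissible partner
of `B` is `B` itself, so letting `λ → ∞` forces `ε ≥ d_Y(P₁(B), P₂(B))`. -/

namespace IsUltrametricDist

variable {X : Type*} [MetricSpace X] [IsUltrametricDist X]

lemma thickening_ball_eq {a : X} {r δ : ℝ} (hδ : 0 < δ) (hδr : δ ≤ r) :
    thickening δ (ball a r) = ball a r := by
  refine subset_antisymm (fun x hx => ?_) (self_subset_thickening hδ _)
  obtain ⟨y, hy, hxy⟩ := mem_thickening_iff.mp hx
  rw [ball_eq_of_mem hy]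
  exact mem_ball.mpr (hxy.trans_le hδr)

lemma thickening_closedBall_eq {a : X} {r δ : ℝ} (hδ : 0 < δ) (hδr : δ ≤ r) :
    thickening δ (closedBall a r) = closedBall a r := by
  refine subset_antisymm (fun x hx => ?_) (self_subset_thickening hδ _)
  obtain ⟨y, hy, hxy⟩ := mem_thickening_iff.mp hx
  rw [closedBall_eq_of_mem hy]
  exact mem_closedBall.mpr (hxy.le.trans hδr)

lemma exists_forall_thickening_eq (B : BallSet X) :
    ∃ r > 0, ∀ δ, 0 < δ → δ ≤ r → thickening δ (B : Set X) = B := by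
  obtain ⟨a, r, hr, hB | hB⟩ := B.2 <;> refine ⟨r, hr, fun δ hδ hδr => ?_⟩ <;> rw [hB]
  · exact thickening_ball_eq hδ hδr
  · exact thickening_closedBall_eq hδ hδr

end IsUltrametricDist

open IsUltrametricDist

section BetaStar

variable {X Y : Type*} [MetricSpace X] [MetricSpace Y] [IsUltrametricDist X]
  {P₁ P₂ : BallSet X → Y}

lemma betaStarL_le_ofReal {lam ε : ℝ} (hlam : 0 < lam) (hε : 0 < ε)
    (h : ∀ B, edist (P₁ B) (P₂ B) ≤ ENNReal.ofReal ε) :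
    betaStarL lam P₁ P₂ ≤ ENNReal.ofReal ε := by
  refine sInf_le ⟨ε, hε, rfl, fun B => ?_⟩
  obtain ⟨r, hr, hthick⟩ := exists_forall_thickening_eq B
  set δ := min ε (r / lam)
  have hδ : 0 < δ := lt_min hε (by positivity)
  have hlamδ : lam * δ ≤ r := by
    calc lam * δ ≤ lam * (r / lam) := by gcongr; exact min_le_right _ _
      _ = r := by field_simp
  have hB : (B : Set X) = thickening (lam * δ) B := (hthick _ (by positivity) hlamδ).symm
  exact ⟨δ, δ, hδ, min_le_left _ _, hδ, min_le_left _ _, B, B, hB, hB, h B,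
    edist_comm (P₁ B) _ ▸ h B⟩

lemma betaStarL_le_rhoSB {lam : ℝ} (hlam : 0 < lam) : betaStarL lam P₁ P₂ ≤ rhoSB P₁ P₂ := by
  refine le_of_forall_gt_imp_ge_of_dense fun a ha => ?_
  obtain ⟨ε, -, hρε, hεa⟩ := ENNReal.lt_iff_exists_real_btwn.mp ha
  have hε : 0 < ε := ENNReal.ofReal_pos.mp (pos_of_gt hρε)
  exact (betaStarL_le_ofReal hlam hε fun B =>
    (le_iSup (fun B => edist (P₁ B) (P₂ B)) B).trans hρε.le).trans hεa.le

lemma exists_le_betaStarL (B : BallSet X) {c : ℝ≥0} (hc : 0 < c)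
    (hcB : (c : ℝ≥0∞) ≤ edist (P₁ B) (P₂ B)) : ∃ lam > 0, (c : ℝ≥0∞) ≤ betaStarL lam P₁ P₂ := by
  obtain ⟨r, hr, hthick⟩ := exists_forall_thickening_eq B
  refine ⟨r / c, by positivity, le_sInf ?_⟩
  rintro _ ⟨ε, hε, rfl, hadm⟩
  by_contra! hεc
  have hεc' : ε < c := by
    rwa [← ENNReal.ofReal_coe_nnreal, ENNReal.ofReal_lt_ofReal_iff (by positivity)] at hεc
  obtain ⟨εB, -, hεB, hεBε, -, -, B', -, hB', -, hdist, -⟩ := hadm B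
  have hB'B : B' = B := by
    refine Subtype.ext (hB'.trans (hthick _ (by positivity) ?_))
    calc r / c * εB ≤ r / c * c := by gcongr; linarith
      _ = r := by field_simp
  rw [hB'B] at hdist
  exact (hdist.trans_lt hεc).not_ge hcB

end BetaStar

theorem stmt_18_general {X Y : Type*} [MetricSpace X] [MetricSpace Y]
    (hnaX : ∀ x y z : X, dist x z ≤ max (dist x y) (dist y z))
    (P₁ P₂ : BallSet X → Y) :
    (⨆ (lam : ℝ) (_ : 0 < lam), betaStarL lam P₁ P₂) = rhoSB P₁ P₂ := by
  have : IsUltrametricDist X := ⟨hnaX⟩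
  refine le_antisymm (iSup₂_le fun lam hlam => betaStarL_le_rhoSB hlam) (iSup_le fun B => ?_)
  refine ENNReal.le_of_forall_pos_nnreal_lt fun c hc hcB => ?_
  obtain ⟨lam, hlam, hle⟩ := exists_le_betaStarL B hc hcB.le
  exact hle.trans (le_iSup₂ (f := fun lam (_ : 0 < lam) => betaStarL lam P₁ P₂) lam hlam)

theorem stmt_18 {X Y : Type*} [MetricSpace X] [MetricSpace Y]
    (hnaX : ∀ x y z : X, dist x z ≤ max (dist x y) (dist y z))
    (hnaY : ∀ x y z : Y, dist x z ≤ max (dist x y) (dist y z))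
    (hball : ∀ B : Set X, IsBall B → ∃ x ∈ B, ∃ y ∈ B, x ≠ y)
    (P₁ P₂ : BallSet X → Y) (hne : P₁ ≠ P₂) :
    (⨆ (lam : ℝ) (_ : 0 < lam), betaStarL lam P₁ P₂) = rhoSB P₁ P₂ :=
  stmt_18_general hnaX P₁ P₂
end
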